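/- Let f : X → ℝ be Hölder continuous admitting a unique maximizing measure μ_∞, let V be a calibrated subaction for f, and set R_− = f + V − V∘σ − β(f). Let (y_n)_{n≥1} be a sequence in X satisfying σ(y_{n+1}) = y_n for all n ≥ 1 and R_−(y_n) = 0 for all n ≥ 1. Then every point p in the support of μ_∞ is an accumulation point of the sequence (y_n). -/

import Mathlib

/-
Krylov–Bogolyubov along the backward orbit: the empirical measures
`(n + 1)⁻¹ ∑_{k ≤ n} δ_{y (k + 1)}` have a weak cluster point `μ`, and since
`σ (y (k + 2)) = y (k + 1)`, replacing `g` by `g ∘ σ` changes each empirical average only by two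
boundary terms of size `O(1 / n)`, so `μ` is `σ`-invariant. `R₋` vanishes along the orbit, so
`∫ R₋ dμ = 0`, which by invariance reads `∫ f dμ = β(f)`: `μ` is maximizing, hence `μ = μ_∞`.
A point `p` that is not an accumulation point has a neighbourhood the orbit eventually avoids; a
bump function at `p` then has vanishing empirical averages, hence vanishing `μ`-integral, so `p`
is not in the support of `μ_∞`.
-/

open MeasureTheory Filter Topology Set ENNReal

noncomputable section

namespace GXY

variable {M : Type*}

/-- The shift map on the sequence space `ℕ → M`. -/
def shift (x : ℕ → M) : ℕ → M := fun n => x (n + 1)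

/-- Prepending a symbol `a` to a sequence `x`. -/
def cons (a : M) (x : ℕ → M) : ℕ → M := fun n => Nat.casesOn n a x

/-- The metric `d(x,y) = ∑ θ^n d_M(x_n, y_n)` on `ℕ → M`. -/
def D [MetricSpace M] (θ : ℝ) (x y : ℕ → M) : ℝ := ∑' n, θ ^ n * dist (x n) (y n)

/-- Hölder continuity with respect to the metric `D θ`. -/
def IsHolder [MetricSpace M] (θ : ℝ) (f : (ℕ → M) → ℝ) : Prop :=
  ∃ C > (0 : ℝ), ∃ α ∈ Set.Ioc (0 : ℝ) 1, ∀ x y, |f x - f y| ≤ C * (D θ x y) ^ α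

/-- Shift-invariant Borel probability measures on `ℕ → M`. -/
def IsInvProb [MetricSpace M] [MeasurableSpace M] (μ : Measure (ℕ → M)) : Prop :=
  IsProbabilityMeasure μ ∧ μ.map shift = μ

/-- The maximal ergodic average `β(f)`. -/
def betaF [MetricSpace M] [MeasurableSpace M] (f : (ℕ → M) → ℝ) : ℝ :=
  sSup { r | ∃ μ : Measure (ℕ → M), IsInvProb μ ∧ r = ∫ x, f x ∂μ }

/-- A maximizing measure for `f`. -/
def IsMaximizing [MetricSpace M] [MeasurableSpace M] (f : (ℕ → M) → ℝ)
    (μ : Measure (ℕ → M)) : Prop :=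
  IsInvProb μ ∧ ∫ x, f x ∂μ = betaF f

/-- A calibrated subaction `V` for `f`:
`V y = max_{σ x = y} (f x + V x - β f)` for every `y`. -/
def IsCalibrated [MetricSpace M] [MeasurableSpace M] (f V : (ℕ → M) → ℝ) : Prop :=
  Continuous V ∧
    ∀ y, IsGreatest { t | ∃ x, shift x = y ∧ t = f x + V x - betaF f } (V y)

/-- The Ruelle transfer operator `(L_g w)(x) = ∫_M e^{g(ax)} w(ax) dm(a)`. -/
def Ruelle [MetricSpace M] [MeasurableSpace M] (m : Measure M) (g w : (ℕ → M) → ℝ) :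
    (ℕ → M) → ℝ :=
  fun x => ∫ a, Real.exp (g (cons a x)) * w (cons a x) ∂m

/-- `R₊ = β(f) + V ∘ σ - V - f ≥ 0`. -/
def Rplus [MetricSpace M] [MeasurableSpace M] (f V : (ℕ → M) → ℝ) (x : ℕ → M) : ℝ :=
  betaF f + V (shift x) - V x - f x

/-- `R₊^∞(z) = ∑_{j≥0} R₊(σ^j z) ∈ [0,∞]`. -/
def RplusInf [MetricSpace M] [MeasurableSpace M] (f V : (ℕ → M) → ℝ) (z : ℕ → M) : ℝ≥0∞ :=
  ∑' j : ℕ, ENNReal.ofReal (Rplus f V (shift^[j] z))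

/-- `R₋ = f + V - V ∘ σ - β(f) ≤ 0`. -/
def Rminus [MetricSpace M] [MeasurableSpace M] (f V : (ℕ → M) → ℝ) (x : ℕ → M) : ℝ :=
  f x + V x - V (shift x) - betaF f

/-- The Birkhoff sum `R₋^k = ∑_{j<k} R₋ ∘ σ^j`. -/
def RminusBirk [MetricSpace M] [MeasurableSpace M] (f V : (ℕ → M) → ℝ) (k : ℕ)
    (z : ℕ → M) : ℝ :=
  ∑ j ∈ Finset.range k, Rminus f V (shift^[j] z)

/-- Extended-real logarithm with the convention `log 0 = -∞`. -/
def elog (t : ℝ) : EReal := if t = 0 then ⊥ else ((Real.log t : ℝ) : EReal)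

open scoped BoundedContinuousFunction

section EmpiricalMeasure

variable {X : Type*} [MeasurableSpace X]

def empiricalMeasure (z : ℕ → X) (n : ℕ) : ProbabilityMeasure X :=
  ⟨((n + 1 : ℕ) : ℝ≥0∞)⁻¹ • ∑ k ∈ Finset.range (n + 1), Measure.dirac (z k), by
    constructor
    simp [ENNReal.inv_mul_cancel]⟩

lemma integral_empiricalMeasure (z : ℕ → X) (n : ℕ) {g : X → ℝ} (hg : Measurable g) :
    ∫ x, g x ∂(empiricalMeasure z n : Measure X) =
      (∑ k ∈ Finset.range (n + 1), g (z k)) / (n + 1) := by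
  rw [empiricalMeasure, ProbabilityMeasure.coe_mk, integral_smul_measure,
    integral_finsetSum_measure fun k _ => integrable_dirac' hg.stronglyMeasurable enorm_lt_top]
  simp only [integral_dirac' _ _ hg.stronglyMeasurable]
  simp [div_eq_inv_mul, ENNReal.toReal_add]

lemma integral_comp_sub_integral_empiricalMeasure {z : ℕ → X} {T : X → X}
    (hz : ∀ k, T (z (k + 1)) = z k) {g : X → ℝ} (hg : Measurable g)
    (hgT : Measurable fun x => g (T x)) (n : ℕ) :
    ∫ x, g (T x) ∂(empiricalMeasure z n : Measure X) - ∫ x, g x ∂(empiricalMeasure z n : Measure X)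
      = (g (T (z 0)) - g (z n)) / (n + 1) := by
  rw [integral_empiricalMeasure z n hgT, integral_empiricalMeasure z n hg, ← sub_div,
    Finset.sum_range_succ', Finset.sum_range_succ]
  simp only [hz]
  ring

lemma tendsto_integral_empiricalMeasure_of_eventually_eq_zero {z : ℕ → X} {g : X → ℝ}
    (hg : Measurable g) (hgz : ∀ᶠ k in atTop, g (z k) = 0) :
    Tendsto (fun n => ∫ x, g x ∂(empiricalMeasure z n : Measure X)) atTop (𝓝 0) := by
  obtain ⟨N, hN⟩ := eventually_atTop.1 hgz
  set c := ∑ k ∈ Finset.range N, g (z k)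
  have hsum : ∀ n ≥ N, ∑ k ∈ Finset.range (n + 1), g (z k) = c := fun n hn => by
    rw [← Finset.sum_range_add_sum_Ico _ (by omega : N ≤ n + 1),
      Finset.sum_eq_zero fun k hk => hN k (Finset.mem_Ico.1 hk).1, add_zero]
  refine (by simpa using tendsto_one_div_add_atTop_nhds_zero_nat.const_mul c :
    Tendsto (fun n : ℕ => c * (1 / ((n : ℝ) + 1))) atTop (𝓝 0)).congr' ?_
  filter_upwards [eventually_ge_atTop N] with n hn
  rw [integral_empiricalMeasure z n hg, hsum n hn, mul_one_div]

variable [TopologicalSpace X] [OpensMeasurableSpace X]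

lemma tendsto_integral_comp_sub_empiricalMeasure {z : ℕ → X} {T : X → X}
    (hz : ∀ k, T (z (k + 1)) = z k) (hT : Continuous T) (g : X →ᵇ ℝ) :
    Tendsto (fun n => ∫ x, g (T x) - g x ∂(empiricalMeasure z n : Measure X)) atTop (𝓝 0) := by
  refine squeeze_zero_norm (fun n => ?_) (by
    simpa using tendsto_one_div_add_atTop_nhds_zero_nat.const_mul (2 * ‖g‖) :
      Tendsto (fun n : ℕ => 2 * ‖g‖ * ((n : ℝ) + 1)⁻¹) atTop (𝓝 0))
  rw [integral_sub (f := fun x => g (T x)) ((g.compContinuous ⟨T, hT⟩).integrable _)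
      (g.integrable _),
    integral_comp_sub_integral_empiricalMeasure hz g.continuous.measurable
      (g.continuous.comp hT).measurable,
    norm_div, ← dist_eq_norm, Real.norm_of_nonneg (by positivity), ← div_eq_mul_inv]
  exact div_le_div_of_nonneg_right (g.dist_le_two_norm _ _) (by positivity)

end EmpiricalMeasure

section ClusterMeasure

variable {X : Type*} [MeasurableSpace X] [TopologicalSpace X] [OpensMeasurableSpace X]
  {z : ℕ → X} {μ : ProbabilityMeasure X}

lemma integral_eq_of_mapClusterPt_empiricalMeasure (hμ : MapClusterPt μ atTop (empiricalMeasure z))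
    (g : X →ᵇ ℝ) {c : ℝ}
    (hg : Tendsto (fun n => ∫ x, g x ∂(empiricalMeasure z n : Measure X)) atTop (𝓝 c)) :
    ∫ x, g x ∂(μ : Measure X) = c := by
  have hcont := ProbabilityMeasure.continuous_integral_boundedContinuousFunction g
  exact eq_of_nhds_neBot <| (hμ.continuousAt_comp hcont.continuousAt).clusterPt.mono hg

lemma map_eq_of_mapClusterPt_empiricalMeasure [HasOuterApproxClosed X] [BorelSpace X]
    (hμ : MapClusterPt μ atTop (empiricalMeasure z)) {T : X → X} (hT : Continuous T)
    (hz : ∀ k, T (z (k + 1)) = z k) :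
    (μ : Measure X).map T = μ := by
  refine ext_of_forall_integral_eq_of_IsFiniteMeasure fun g => ?_
  have h : ∫ x, g (T x) - g x ∂(μ : Measure X) = 0 :=
    integral_eq_of_mapClusterPt_empiricalMeasure hμ (g.compContinuous ⟨T, hT⟩ - g)
      (tendsto_integral_comp_sub_empiricalMeasure hz hT g)
  rw [integral_sub (f := fun x => g (T x)) ((g.compContinuous ⟨T, hT⟩).integrable _)
    (g.integrable _)] at h
  rw [integral_map hT.aemeasurable g.continuous.aestronglyMeasurable]
  exact sub_eq_zero.1 h

lemma integral_eq_zero_of_mapClusterPt_empiricalMeasure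
    (hμ : MapClusterPt μ atTop (empiricalMeasure z)) (g : X →ᵇ ℝ)
    (hgz : ∀ᶠ k in atTop, g (z k) = 0) : ∫ x, g x ∂(μ : Measure X) = 0 :=
  integral_eq_of_mapClusterPt_empiricalMeasure hμ g
    (tendsto_integral_empiricalMeasure_of_eventually_eq_zero g.continuous.measurable hgz)

lemma mapClusterPt_of_mapClusterPt_empiricalMeasure [CompactSpace X] [T2Space X]
    (hμ : MapClusterPt μ atTop (empiricalMeasure z)) {p : X}
    (hp : ∀ U : Set X, IsOpen U → p ∈ U → 0 < (μ : Measure X) U) : MapClusterPt p atTop z := by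
  by_contra hnot
  obtain ⟨U, hU, hzU⟩ : ∃ U ∈ 𝓝 p, ∀ᶠ k in atTop, z k ∉ U := by
    simpa [mapClusterPt_iff_frequently, not_frequently] using hnot
  obtain ⟨W, hWU, hWo, hpW⟩ := mem_nhds_iff.1 hU
  obtain ⟨g, hgp, hgW, -, hg01⟩ := exists_continuous_one_zero_of_isCompact isCompact_singleton
    hWo.isClosed_compl (disjoint_compl_right_iff_subset.2 (singleton_subset_iff.2 hpW))
  set G := BoundedContinuousFunction.mkOfCompact g
  have hG0 : ∫ x, G x ∂(μ : Measure X) = 0 :=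
    integral_eq_zero_of_mapClusterPt_empiricalMeasure hμ G
      (hzU.mono fun k hk => hgW fun hkW => hk (hWU hkW))
  have hGae : G =ᵐ[(μ : Measure X)] 0 :=
    (integral_eq_zero_iff_of_nonneg (fun x => (hg01 x).1) (G.integrable _)).1 hG0
  refine (hp {x | G x ≠ 0} (isOpen_ne_fun G.continuous continuous_const) ?_).ne' (ae_iff.1 hGae)
  simp [G, hgp rfl]

end ClusterMeasure

section ShiftSpace

lemma continuous_shift [TopologicalSpace M] : Continuous (shift : (ℕ → M) → ℕ → M) :=
  continuous_pi fun n => continuous_apply (n + 1)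

variable [MetricSpace M] {θ : ℝ}

lemma continuous_D_left (hθ0 : 0 ≤ θ) (hθ1 : θ < 1) (hdiam : ∀ a b : M, dist a b ≤ 1)
    (x : ℕ → M) : Continuous fun z => D θ z x := by
  refine continuous_tsum
    (fun n => continuous_const.mul ((continuous_apply n).dist continuous_const))
    (summable_geometric_of_lt_one hθ0 hθ1) fun n z => ?_
  rw [norm_mul, norm_pow, Real.norm_of_nonneg hθ0, Real.norm_of_nonneg dist_nonneg]
  exact mul_le_of_le_one_right (pow_nonneg hθ0 n) (hdiam _ _)

lemma IsHolder.continuous (hθ0 : 0 ≤ θ) (hθ1 : θ < 1) (hdiam : ∀ a b : M, dist a b ≤ 1)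
    {f : (ℕ → M) → ℝ} (hf : IsHolder θ f) : Continuous f := by
  obtain ⟨C, -, α, hα, hfC⟩ := hf
  refine continuous_iff_continuousAt.2 fun x => tendsto_iff_dist_tendsto_zero.2 ?_
  have hbound : Tendsto (fun z => C * D θ z x ^ α) (𝓝 x) (𝓝 0) := by
    have hcont : Continuous fun z => C * D θ z x ^ α :=
      continuous_const.mul ((continuous_D_left hθ0 hθ1 hdiam x).rpow_const
        fun _ => Or.inr hα.1.le)
    simpa [D, Real.zero_rpow hα.1.ne'] using hcont.tendsto x
  exact squeeze_zero (fun _ => dist_nonneg) (fun z => hfC z x) hbound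

variable [MeasurableSpace M]

lemma continuous_Rminus {f V : (ℕ → M) → ℝ} (hf : Continuous f) (hV : Continuous V) :
    Continuous (Rminus f V) :=
  ((hf.add hV).sub (hV.comp continuous_shift)).sub continuous_const

lemma integral_Rminus [CompactSpace M] [BorelSpace M] {f V : (ℕ → M) → ℝ} (hf : Continuous f)
    (hV : Continuous V) {μ : Measure (ℕ → M)} (hμ : IsInvProb μ) :
    ∫ x, Rminus f V x ∂μ = ∫ x, f x ∂μ - betaF f := by
  obtain ⟨hprob, hinv⟩ := hμ
  have hint : ∀ {g : (ℕ → M) → ℝ}, Continuous g → Integrable g μ := fun hg =>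
    hg.integrable_of_hasCompactSupport (HasCompactSupport.of_compactSpace _)
  have hVshift : ∫ x, V (shift x) ∂μ = ∫ x, V x ∂μ := by
    rw [← integral_map continuous_shift.aemeasurable hV.aestronglyMeasurable, hinv]
  simp only [Rminus]
  rw [integral_sub (f := fun x => f x + V x - V (shift x))
      ((hint (hf.add hV)).sub (hint (hV.comp continuous_shift))) (integrable_const _),
    integral_sub (f := fun x => f x + V x) (g := fun x => V (shift x))
      ((hint hf).add (hint hV)) (hint (hV.comp continuous_shift)),
    integral_add (hint hf) (hint hV), hVshift, integral_const, probReal_univ, one_smul]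
  ring

end ShiftSpace

theorem support_point_is_accumulation_point_of_calibrated_backward_orbit_general
    [MetricSpace M] [CompactSpace M] [MeasurableSpace M] [BorelSpace M]
    (hdiam : ∀ a b : M, dist a b ≤ 1)
    (θ : ℝ) (hθ : θ ∈ Set.Ioo (0 : ℝ) 1)
    (f V : (ℕ → M) → ℝ) (hf : IsHolder θ f)
    (μinf : Measure (ℕ → M))
    (huniq : ∀ μ' : Measure (ℕ → M), IsMaximizing f μ' → μ' = μinf)
    (hV : IsCalibrated f V)
    (y : ℕ → (ℕ → M))
    (hy : ∀ n ≥ 1, shift (y (n + 1)) = y n)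
    (hR : ∀ n ≥ 1, Rminus f V (y n) = 0) :
    ∀ p : ℕ → M, (∀ U : Set (ℕ → M), IsOpen U → p ∈ U → 0 < μinf U) →
      MapClusterPt p atTop y := by
  intro p hp
  set z : ℕ → ℕ → M := fun k => y (k + 1)
  have hz : ∀ k, shift (z (k + 1)) = z k := fun k => hy (k + 1) (by omega)
  have hfc : Continuous f := hf.continuous hθ.1.le hθ.2 hdiam
  obtain ⟨μ, hμ⟩ := exists_clusterPt_of_compactSpace (map (empiricalMeasure z) atTop)
  have hinv : IsInvProb (μ : Measure (ℕ → M)) :=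
    ⟨inferInstance, map_eq_of_mapClusterPt_empiricalMeasure hμ continuous_shift hz⟩
  have hR0 : ∫ x, Rminus f V x ∂(μ : Measure (ℕ → M)) = 0 :=
    integral_eq_zero_of_mapClusterPt_empiricalMeasure hμ
      (BoundedContinuousFunction.mkOfCompact ⟨_, continuous_Rminus hfc hV.1⟩)
      (Eventually.of_forall fun k => hR (k + 1) (by omega))
  have hμmax : IsMaximizing f (μ : Measure (ℕ → M)) :=
    ⟨hinv, by linarith [integral_Rminus hfc hV.1 hinv]⟩
  rw [← huniq _ hμmax] at hp
  exact (mapClusterPt_of_mapClusterPt_empiricalMeasure hμ hp).of_comp (tendsto_add_atTop_nat 1)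

theorem support_point_is_accumulation_point_of_calibrated_backward_orbit
    [MetricSpace M] [CompactSpace M] [ConnectedSpace M] [MeasurableSpace M] [BorelSpace M]
    (hdiam : ∀ a b : M, dist a b ≤ 1)
    (θ : ℝ) (hθ : θ ∈ Set.Ioo (0 : ℝ) 1)
    (f V : (ℕ → M) → ℝ) (hf : IsHolder θ f)
    (μinf : Measure (ℕ → M)) (hmax : IsMaximizing f μinf)
    (huniq : ∀ μ' : Measure (ℕ → M), IsMaximizing f μ' → μ' = μinf)
    (hV : IsCalibrated f V)
    (y : ℕ → (ℕ → M))
    (hy : ∀ n ≥ 1, shift (y (n + 1)) = y n)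
    (hR : ∀ n ≥ 1, Rminus f V (y n) = 0) :
    ∀ p : ℕ → M, (∀ U : Set (ℕ → M), IsOpen U → p ∈ U → 0 < μinf U) →
      MapClusterPt p atTop y :=
  support_point_is_accumulation_point_of_calibrated_backward_orbit_general hdiam θ hθ f V hf μinf
    huniq hV y hy hR

end GXY
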